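/- An unrooted directed tree A has a free left end (i.e., there exists n ∈ ℤ such that the generation Gen_k is a singleton for all k ≤ n) if and only if A has at least one finite generation; and in that case A has infinitely many finite generations. -/

import Mathlib

open Filter Topology
open scoped ENNReal NNReal

/-- An unrooted (leafless when combined with a surjectivity hypothesis) directed tree on
a vertex set `A`: every vertex has exactly one parent, there are no cycles, and the graph
is connected (any two vertices have a common ancestor). -/
structure UTree (A : Type*) where
  par : A → A
  acyclic : ∀ (v : A) (n : ℕ), 0 < n → par^[n] v ≠ v
  connected : ∀ u v : A, ∃ m n : ℕ, par^[m] u = par^[n] v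

namespace UTree
variable {A : Type*} (T : UTree A)

/-- The set of children of a vertex. -/
def chi (v : A) : Set A := {u | T.par u = v}

/-- `chiIter n v = Chi^n(v)`, the set of `n`-th descendants of `v`. -/
def chiIter : ℕ → A → Set A
  | 0, v => {v}
  | n + 1, v => ⋃ u ∈ chiIter n v, T.chi u

/-- For `u ∈ Chi^n(v)`, `wt lam n u = λ(v → u) = λ(Par^n(u) → u) = ∏_{k<n} λ_{Par^k(u)}`. -/
def wt (lam : A → ℂ) (n : ℕ) (u : A) : ℂ :=
  ∏ k ∈ Finset.range n, lam (T.par^[k] u)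

/-- `B` is the weighted backward shift with weight `lam` on `ℓ^p(A)`. -/
def IsWBS (lam : A → ℂ) {p : ℝ≥0∞} [Fact (1 ≤ p)]
    (B : lp (fun _ : A => ℂ) p →L[ℂ] lp (fun _ : A => ℂ) p) : Prop :=
  ∀ f : lp (fun _ : A => ℂ) p, ∀ v : A,
    (B f : ∀ _ : A, ℂ) v = ∑' u : T.chi v, lam u * (f : ∀ _ : A, ℂ) u

/-- The `n`-th generation (`n ∈ ℤ`) with respect to a reference vertex `v₀`:
all vertices lying in `Chi^{k+n}(Par^k(v₀))` for some `k ≥ max(−n, 0)`. -/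
def gen (v₀ : A) (n : ℤ) : Set A :=
  {v | ∃ k : ℕ, 0 ≤ n + k ∧ v ∈ T.chiIter (n + k).toNat (T.par^[k] v₀)}

end UTree

/- **Statement 17.** An unrooted (leafless) directed tree has a free left end — there is
`n ∈ ℤ` such that `Gen_k` is a singleton for all `k ≤ n` — if and only if it has at least
one finite generation; and in that case it has infinitely many finite generations. -/

namespace Stmt17Aux
open UTree
variable {A : Type*} (T : UTree A)

lemma chiIter_eq (m : ℕ) (x : A) : T.chiIter m x = {v | T.par^[m] v = x} := by
  induction m generalizing x with
  | zero => ext v; simp [UTree.chiIter]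
  | succ n ih =>
    ext v
    simp only [UTree.chiIter, Set.mem_iUnion, ih, UTree.chi, Set.mem_setOf_eq,
      Function.iterate_succ_apply]
    constructor
    · rintro ⟨u, hu, rfl⟩; exact hu
    · intro h; exact ⟨T.par v, h, rfl⟩

lemma mem_gen {v₀ v : A} {n : ℤ} :
    v ∈ T.gen v₀ n ↔ ∃ k : ℕ, 0 ≤ n + k ∧ T.par^[(n + k).toNat] v = T.par^[k] v₀ := by
  simp [UTree.gen, chiIter_eq]

lemma witness_succ {v₀ v : A} {n : ℤ} {k : ℕ} (h0 : 0 ≤ n + k)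
    (h : T.par^[(n + k).toNat] v = T.par^[k] v₀) :
    0 ≤ n + (k + 1 : ℕ) ∧ T.par^[(n + (k + 1 : ℕ)).toNat] v = T.par^[(k + 1)] v₀ := by
  have ht : (n + (k + 1 : ℕ)).toNat = (n + k).toNat + 1 := by push_cast; omega
  refine ⟨by push_cast; omega, ?_⟩
  rw [ht, Function.iterate_succ_apply', Function.iterate_succ_apply', h]

lemma witness_mono {v₀ v : A} {n : ℤ} {k k' : ℕ} (hk : k ≤ k') (h0 : 0 ≤ n + k)
    (h : T.par^[(n + k).toNat] v = T.par^[k] v₀) :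
    0 ≤ n + k' ∧ T.par^[(n + k').toNat] v = T.par^[k'] v₀ := by
  induction k' with
  | zero =>
    have hk0 : k = 0 := Nat.le_zero.mp hk
    subst hk0; exact ⟨h0, h⟩
  | succ m ih =>
    rcases Nat.lt_or_ge k (m+1) with hlt | hge
    · have hm : k ≤ m := by omega
      obtain ⟨a, b⟩ := ih hm
      exact witness_succ T a b
    · have : k = m + 1 := by omega
      subst this; exact ⟨h0, h⟩

lemma exists_desc (hleaf : ∀ v : A, (T.chi v).Nonempty) (m : ℕ) (x : A) :
    ∃ v, T.par^[m] v = x := by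
  induction m with
  | zero => exact ⟨x, rfl⟩
  | succ n ih =>
    obtain ⟨v, hv⟩ := ih
    obtain ⟨u, hu⟩ := hleaf v
    exact ⟨u, by rw [Function.iterate_succ_apply, hu, hv]⟩

lemma gen_nonempty (hleaf : ∀ v : A, (T.chi v).Nonempty) (v₀ : A) (n : ℤ) :
    (T.gen v₀ n).Nonempty := by
  rcases le_or_gt 0 n with h | h
  · obtain ⟨v, hv⟩ := exists_desc T hleaf n.toNat v₀
    exact ⟨v, (mem_gen T).2 ⟨0, by omega, by simpa using hv⟩⟩
  · refine ⟨T.par^[(-n).toNat] v₀, (mem_gen T).2 ⟨(-n).toNat, by omega, ?_⟩⟩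
    have : (n + ((-n).toNat : ℤ)).toNat = 0 := by omega
    rw [this]; simp

lemma image_par (v₀ : A) (hleaf : ∀ v : A, (T.chi v).Nonempty) (n : ℤ) :
    T.par '' T.gen v₀ (n + 1) = T.gen v₀ n := by
  ext w
  constructor
  · rintro ⟨v, hv, rfl⟩
    obtain ⟨k, h0, h⟩ := (mem_gen T).1 hv
    rcases le_or_gt 0 (n + k) with hnk | hnk
    · refine (mem_gen T).2 ⟨k, hnk, ?_⟩
      have ht : (n + 1 + (k : ℤ)).toNat = (n + k).toNat + 1 := by omega
      rw [ht, Function.iterate_succ_apply'] at h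
      rw [← Function.iterate_succ_apply, Function.iterate_succ_apply']
      exact h
    · have ht : (n + 1 + (k : ℤ)).toNat = 0 := by omega
      rw [ht] at h; simp at h
      refine (mem_gen T).2 ⟨k + 1, by omega, ?_⟩
      have ht2 : (n + ((k : ℤ) + 1)).toNat = 0 := by omega
      push_cast
      rw [ht2]
      simp [h, Function.iterate_succ_apply']
  · intro hw
    obtain ⟨k, h0, h⟩ := (mem_gen T).1 hw
    obtain ⟨u, hu⟩ := hleaf w
    refine ⟨u, (mem_gen T).2 ⟨k, by omega, ?_⟩, hu⟩
    have ht : (n + 1 + (k : ℤ)).toNat = (n + k).toNat + 1 := by omega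
    rw [ht, Function.iterate_succ_apply, hu, h]

lemma image_iter (v₀ : A) (hleaf : ∀ v : A, (T.chi v).Nonempty) (n : ℤ) (a : ℕ) :
    T.par^[a] '' T.gen v₀ n = T.gen v₀ (n - a) := by
  induction a generalizing n with
  | zero => simp
  | succ m ih =>
    have h1 : T.par^[m + 1] '' T.gen v₀ n = T.par^[m] '' (T.par '' T.gen v₀ n) := by
      rw [← Set.image_comp, ← Function.iterate_succ]
    have hn : n = (n - 1) + 1 := by ring
    rw [h1, hn, image_par T v₀ hleaf, ih]
    congr 1
    push_cast
    ring

end Stmt17Aux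

namespace Stmt17Aux
open UTree
variable {A : Type*} (T : UTree A)

lemma same_gen {v₀ u w : A} {n : ℤ} (hu : u ∈ T.gen v₀ n) (hw : w ∈ T.gen v₀ n) :
    ∃ a : ℕ, T.par^[a] u = T.par^[a] w := by
  obtain ⟨k, hk0, hk⟩ := (mem_gen T).1 hu
  obtain ⟨k', hk'0, hk'⟩ := (mem_gen T).1 hw
  obtain ⟨a, ha⟩ := witness_mono T (le_max_left k k') hk0 hk
  obtain ⟨b, hb⟩ := witness_mono T (le_max_right k k') hk'0 hk'
  exact ⟨(n + (max k k' : ℕ)).toNat, ha.trans hb.symm⟩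

lemma gen_finite_lower {v₀ : A} (hleaf : ∀ v : A, (T.chi v).Nonempty) {n : ℤ}
    (hf : (T.gen v₀ n).Finite) {m : ℤ} (hm : m ≤ n) : (T.gen v₀ m).Finite := by
  have : m = n - ((n - m).toNat : ℤ) := by omega
  rw [this, ← image_iter T v₀ hleaf]
  exact hf.image _

lemma exists_singleton (hleaf : ∀ v : A, (T.chi v).Nonempty) (v₀ : A) :
    ∀ N : ℕ, ∀ n : ℤ, (T.gen v₀ n).Finite → (T.gen v₀ n).ncard ≤ N →
      ∃ m : ℤ, ∃ a : A, T.gen v₀ m = {a} := by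
  intro N
  induction N with
  | zero =>
    intro n hf hc
    have h1 := Set.ncard_pos hf |>.mpr (gen_nonempty T hleaf v₀ n)
    omega
  | succ N ih =>
    intro n hf hc
    rcases le_or_gt (T.gen v₀ n).ncard 1 with h1 | h1
    · have h0 := Set.ncard_pos hf |>.mpr (gen_nonempty T hleaf v₀ n)
      have : (T.gen v₀ n).ncard = 1 := by omega
      obtain ⟨a, ha⟩ := Set.ncard_eq_one.1 this
      exact ⟨n, a, ha⟩
    · obtain ⟨u, w, hu, hw, huw⟩ := Set.one_lt_ncard_iff hf |>.1 h1
      obtain ⟨a, ha⟩ := same_gen T hu hw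
      have himg : T.gen v₀ (n - a) = T.par^[a] '' T.gen v₀ n :=
        (image_iter T v₀ hleaf n a).symm
      have hsub : T.par^[a] '' T.gen v₀ n = T.par^[a] '' (T.gen v₀ n \ {u}) := by
        apply Set.Subset.antisymm
        · rintro x ⟨y, hy, rfl⟩
          rcases eq_or_ne y u with rfl | hne
          · exact ⟨w, ⟨hw, by simp [huw.symm]⟩, ha.symm⟩
          · exact ⟨y, ⟨hy, by simp [hne]⟩, rfl⟩
        · exact Set.image_mono (Set.diff_subset)
      have hlt : (T.gen v₀ (n - a)).ncard < (T.gen v₀ n).ncard := by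
        rw [himg, hsub]
        calc (T.par^[a] '' (T.gen v₀ n \ {u})).ncard
            ≤ (T.gen v₀ n \ {u}).ncard := Set.ncard_image_le hf.diff
          _ < (T.gen v₀ n).ncard := Set.ncard_diff_singleton_lt_of_mem hu hf
      exact ih (n - a) (himg ▸ hf.image _) (by omega)

lemma singleton_down (hleaf : ∀ v : A, (T.chi v).Nonempty) {v₀ a : A} {m : ℤ}
    (h : T.gen v₀ m = {a}) : ∀ k : ℤ, k ≤ m → ∃ b : A, T.gen v₀ k = {b} := by
  intro k hk
  have : k = m - ((m - k).toNat : ℤ) := by omega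
  rw [this, ← image_iter T v₀ hleaf, h]
  exact ⟨_, Set.image_singleton⟩

end Stmt17Aux

/-- An unrooted (leafless) directed tree has a free left end — there is
`n ∈ ℤ` such that `Gen_k` is a singleton for all `k ≤ n` — if and only if it has at least
one finite generation; and in that case it has infinitely many finite generations. -/
theorem stmt17 {A : Type*} (T : UTree A) (hleaf : ∀ v : A, (T.chi v).Nonempty)
    (v₀ : A) :
    ((∃ n : ℤ, ∀ k : ℤ, k ≤ n → ∃ a : A, T.gen v₀ k = {a}) ↔
      ∃ n : ℤ, (T.gen v₀ n).Finite) ∧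
    ((∃ n : ℤ, (T.gen v₀ n).Finite) → {n : ℤ | (T.gen v₀ n).Finite}.Infinite) := by
  open Stmt17Aux in
  constructor
  · constructor
    · rintro ⟨n, h⟩
      obtain ⟨a, ha⟩ := h n le_rfl
      exact ⟨n, ha ▸ Set.finite_singleton a⟩
    · rintro ⟨n, hf⟩
      obtain ⟨m, a, hm⟩ := exists_singleton T hleaf v₀ (T.gen v₀ n).ncard n hf le_rfl
      exact ⟨m, singleton_down T hleaf hm⟩
  · rintro ⟨n, hf⟩
    refine Set.infinite_of_injective_forall_mem (f := fun k : ℕ => n - k) ?_ ?_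
    · intro a b hab
      simp only at hab
      omega
    · intro k
      exact gen_finite_lower T hleaf hf (sub_le_self n (by positivity))
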